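/- Let k ≥ 2, let N, R be positive integers, and let 0 < γ < 1/4^{k−1}. Let φ : {−1,1}^R → ℝ be given by φ(1^R) = 1/2, φ((−1)^R) = −1/2, and φ(z) = 0 otherwise. Let ψ : {−1,1}^N → ℝ satisfy: ‖ψ‖₁ = 1; Σ_x ψ(x) = 0; Σ_{x ∈ D₊} |ψ(x)| ≤ 1/(48N) where D₊ = {x : ψ(x) > 0 and |x| ≥ k}; and Σ_{x ∈ D₋} |ψ(x)| ≤ 1/2 − 2/4^k where D₋ = {x : ψ(x) < 0 and |x| < k}. Then 2 · Σ_{x ∈ {−1,1}^{NR} ∖ D} |(φ★ψ)(x)| ≤ R/(24N) + e^{−2R(1/4^{k−1} − γ)²}, where D is the domain of GapOR_R^γ ∘ THR_N^k. -/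

import Mathlib

/-!
Put `w = 2|ψ|`. Since `‖ψ‖₁ = 1` and `∑ ψ = 0`, `w` is a probability weight on each of
`{ψ < 0}` and `{ψ ≥ 0}`, and `2|(φ★ψ)(x)|` is at most `∏ᵢ w(xᵢ)` when all `ψ(xᵢ)` have the same
sign and vanishes otherwise. A point outside `D` with all `ψ(xᵢ) ≥ 0` has a block with `|xᵢ| ≥ k`;
by a union bound these have `w^R`-mass at most `R · 2/(48N)`. A point outside `D` with all
`ψ(xᵢ) < 0` has fewer than `γR` blocks with `|xᵢ| ≥ k`, while under `w` on `{ψ < 0}` a block has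
`|xᵢ| ≥ k` with probability `p ≥ 1 - 2(1/2 - 2/4^k) = 1/4^(k-1) > γ`. Hoeffding's lemma for a
Bernoulli variable gives the Chernoff bound `exp(-2R(p - γ)²)` for this lower tail.
-/

open Finset
open scoped Classical

/-- Hamming weight: the number of coordinates equal to −1 (encoded by `true`). -/
def wt {n : ℕ} (x : Fin n → Bool) : ℕ := (Finset.univ.filter (fun i => x i = true)).card

/-- `THR_N^k(x) = −1` (i.e. `true`) iff `|x| ≥ k`. -/
def THR (N k : ℕ) (x : Fin N → Bool) : Bool := decide (k ≤ wt x)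

/-- The dual polynomial `φ` for GapOR: `φ(1^R) = 1/2`, `φ((−1)^R) = −1/2`, `φ(z) = 0` else. -/
noncomputable def phi0 (R : ℕ) : (Fin R → Bool) → ℝ := fun z =>
  if z = fun _ => false then 1 / 2
  else if z = fun _ => true then -(1 / 2)
  else 0

/-- The dual block composition `(φ★ψ)(x) = 2^R · φ(sgn(ψ(x₁)),…,sgn(ψ(x_R))) · ∏ᵢ |ψ(xᵢ)|`. -/
noncomputable def dbc {N R : ℕ} (φ : (Fin R → Bool) → ℝ) (ψ : (Fin N → Bool) → ℝ)
    (x : Fin R → Fin N → Bool) : ℝ :=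
  2 ^ R * φ (fun i => decide (ψ (x i) < 0)) * ∏ i, |ψ (x i)|

/-- The domain of `GapOR_R^γ ∘ THR_N^k`: the vector `(THR(x₁),…,THR(x_R))` is either all
`+1` (all `false`) or has at least `γR` coordinates equal to `−1` (`true`). -/
def inDom (γ : ℝ) (N R k : ℕ) (x : Fin R → Fin N → Bool) : Prop :=
  (∀ i, THR N k (x i) = false) ∨
    γ * R ≤ ((Finset.univ.filter (fun i => THR N k (x i) = true)).card : ℝ)

open Fintype MeasureTheory ProbabilityTheory

-- Hoeffding's lemma for a Bernoulli(`p`) variable, multiplied through by `exp (p * s)`.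
lemma one_sub_add_mul_exp_le_exp {p : ℝ} (hp : p ∈ Set.Icc 0 1) (s : ℝ) :
    1 - p + p * Real.exp s ≤ Real.exp (p * s + s ^ 2 / 8) := by
  set μ : Measure ℝ := bernoulliMeasure 1 0 ⟨p, hp⟩
  have hIcc : ∀ᵐ ω ∂μ, id ω ∈ Set.Icc (0 : ℝ) 1 := by
    rw [ae_iff]
    exact bernoulliMeasure_apply_of_notMem_of_notMem _ measurableSet_Icc.compl (by simp) (by simp)
  have hmgf := (hasSubgaussianMGF_of_mem_Icc aemeasurable_id hIcc).mgf_le s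
  have hmean : μ[id] = p := by simp [μ, integral_bernoulliMeasure]
  rw [mgf, hmean] at hmgf
  norm_num [μ, integral_bernoulliMeasure] at hmgf
  have hshift₁ : Real.exp (p * s) * Real.exp (s * (1 - p)) = Real.exp s := by
    rw [← Real.exp_add]; ring_nf
  have hshift₀ : Real.exp (p * s) * Real.exp (-(s * p)) = 1 := by
    rw [← Real.exp_add, ← Real.exp_zero]; ring_nf
  calc 1 - p + p * Real.exp s
      = Real.exp (p * s) * (p * Real.exp (s * (1 - p)) + (1 - p) * Real.exp (-(s * p))) := by
        rw [mul_add, mul_left_comm, hshift₁, mul_left_comm, hshift₀]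
        ring
    _ ≤ Real.exp (p * s) * Real.exp (s ^ 2 / 8) := by
        gcongr
        exact hmgf.trans_eq (by ring_nf)
    _ = Real.exp (p * s + s ^ 2 / 8) := (Real.exp_add _ _).symm

section ProductWeights

variable {α : Type*} {R : ℕ} {w : α → ℝ} {S : Finset α}

lemma sum_prod_piFinset_sdiff_le [DecidableEq α] (hw : ∀ a ∈ S, 0 ≤ w a) (hS : ∑ a ∈ S, w a = 1)
    {T : Finset α} (hTS : T ⊆ S) :
    ∑ x ∈ piFinset (fun _ : Fin R => S) \ piFinset (fun _ => T), ∏ i, w (x i) ≤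
      R * ∑ a ∈ S \ T, w a := by
  have hT : ∑ a ∈ T, w a = 1 - ∑ a ∈ S \ T, w a := by
    rw [← hS, ← sum_sdiff hTS]; ring
  have hT0 : 0 ≤ ∑ a ∈ T, w a := sum_nonneg fun a ha => hw a (hTS ha)
  rw [sum_sdiff_eq_sub (piFinset_subset _ _ fun _ => hTS), ← sum_pow', ← sum_pow', hS, hT,
    one_pow]
  linarith [one_add_mul_sub_le_pow (a := 1 - ∑ a ∈ S \ T, w a) (by linarith) R]

lemma sum_prod_filter_card_lt_le_exp (hw : ∀ a ∈ S, 0 ≤ w a) (hS : ∑ a ∈ S, w a = 1)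
    (E : α → Prop) [DecidablePred E] {γ : ℝ} (hγ : γ ≤ ∑ a ∈ S with E a, w a) :
    ∑ x ∈ piFinset (fun _ : Fin R => S) with (#{i | E (x i)} : ℝ) < γ * R, ∏ i, w (x i) ≤
      Real.exp (-2 * R * ((∑ a ∈ S with E a, w a) - γ) ^ 2) := by
  set p := ∑ a ∈ S with E a, w a
  have hp : p ∈ Set.Icc 0 1 := by
    refine ⟨sum_nonneg fun a ha => hw a (mem_filter.1 ha).1, hS ▸ ?_⟩
    exact sum_le_sum_of_subset_of_nonneg (filter_subset _ _) fun a ha _ => hw a ha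
  set t := 4 * (p - γ)
  have ht : 0 ≤ t := by simp only [t]; linarith
  -- Markov's inequality for `exp (-t * #{i | E (x i)})`; this `t` optimizes the resulting bound.
  set v : α → ℝ := fun a => w a * if E a then Real.exp (-t) else 1
  have hv0 : ∀ a ∈ S, 0 ≤ v a := fun a ha => mul_nonneg (hw a ha) (by split_ifs <;> positivity)
  have hv : ∑ a ∈ S, v a = 1 - p + p * Real.exp (-t) := by
    simp only [v, mul_ite, mul_one, sum_ite, ← sum_mul]
    linarith [sum_filter_add_sum_filter_not S E w]
  have hmarkov : ∀ x ∈ {x ∈ piFinset (fun _ : Fin R => S) | (#{i | E (x i)} : ℝ) < γ * R},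
      ∏ i, w (x i) ≤ Real.exp (t * γ * R) * ∏ i, v (x i) := by
    intro x hx
    have hcount := (mem_filter.1 hx).2
    have hw0 : 0 ≤ ∏ i, w (x i) :=
      prod_nonneg fun i _ => hw _ (mem_piFinset.1 (mem_filter.1 hx).1 i)
    have htilt : ∏ i, v (x i) = (∏ i, w (x i)) * Real.exp (#{i | E (x i)} * -t) := by
      simp only [v, prod_mul_distrib, prod_ite, prod_const, one_pow, mul_one, ← Real.exp_nat_mul]
    rw [htilt, mul_left_comm, ← Real.exp_add]
    refine le_mul_of_one_le_right hw0 (Real.one_le_exp ?_)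
    nlinarith
  calc ∑ x ∈ piFinset (fun _ : Fin R => S) with (#{i | E (x i)} : ℝ) < γ * R, ∏ i, w (x i)
      ≤ ∑ x ∈ piFinset (fun _ : Fin R => S) with (#{i | E (x i)} : ℝ) < γ * R,
          Real.exp (t * γ * R) * ∏ i, v (x i) := sum_le_sum hmarkov
    _ ≤ ∑ x ∈ piFinset (fun _ : Fin R => S), Real.exp (t * γ * R) * ∏ i, v (x i) :=
        sum_le_sum_of_subset_of_nonneg (filter_subset _ _) fun x hx _ =>
          mul_nonneg (Real.exp_pos _).le (prod_nonneg fun i _ => hv0 _ (mem_piFinset.1 hx i))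
    _ = Real.exp (t * γ * R) * (1 - p + p * Real.exp (-t)) ^ R := by
        rw [← mul_sum, ← sum_pow', hv]
    _ ≤ Real.exp (t * γ * R) * Real.exp (p * -t + (-t) ^ 2 / 8) ^ R := by
        gcongr
        · exact hv ▸ sum_nonneg hv0
        · exact one_sub_add_mul_exp_le_exp hp (-t)
    _ = Real.exp (-2 * R * (p - γ) ^ 2) := by
        rw [← Real.exp_nat_mul, ← Real.exp_add]
        simp only [t]
        ring_nf

end ProductWeights

section SignedMass

variable {β : Type*} [Fintype β] {ψ : β → ℝ}

lemma sum_abs_filter_neg_eq_half_and_sum_abs_filter_nonneg_eq_half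
    (h1 : ∑ x, |ψ x| = 1) (h0 : ∑ x, ψ x = 0) :
    ∑ x with ψ x < 0, |ψ x| = 1 / 2 ∧ ∑ x with 0 ≤ ψ x, |ψ x| = 1 / 2 := by
  have hneg : ∑ x with ψ x < 0, ψ x = -∑ x with ψ x < 0, |ψ x| := by
    rw [← sum_neg_distrib]
    exact sum_congr rfl fun x hx => by rw [abs_of_neg (mem_filter.1 hx).2, neg_neg]
  have hnonneg : ∑ x with 0 ≤ ψ x, ψ x = ∑ x with 0 ≤ ψ x, |ψ x| :=
    sum_congr rfl fun x hx => (abs_of_nonneg (mem_filter.1 hx).2).symm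
  have hsplit (f : β → ℝ) : ∑ x with ψ x < 0, f x + ∑ x with 0 ≤ ψ x, f x = ∑ x, f x := by
    simpa only [not_lt] using sum_filter_add_sum_filter_not univ (fun x => ψ x < 0) f
  constructor <;> linarith [hsplit ψ, hsplit (|ψ ·|)]

end SignedMass

lemma abs_phi0_le (R : ℕ) (z : Fin R → Bool) :
    |phi0 R z| ≤
      (if z = fun _ => false then 1 / 2 else 0) + (if z = fun _ => true then 1 / 2 else 0) := by
  unfold phi0
  split_ifs <;> norm_num

lemma two_mul_abs_dbc_phi0_le {N R : ℕ} (ψ : (Fin N → Bool) → ℝ) (x : Fin R → Fin N → Bool) :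
    2 * |dbc (phi0 R) ψ x| ≤
      (if ∀ i, 0 ≤ ψ (x i) then ∏ i, 2 * |ψ (x i)| else 0) +
        (if ∀ i, ψ (x i) < 0 then ∏ i, 2 * |ψ (x i)| else 0) := by
  have hfalse : ((fun i => decide (ψ (x i) < 0)) = fun _ => false) ↔ ∀ i, 0 ≤ ψ (x i) := by
    simp [funext_iff]
  have htrue : ((fun i => decide (ψ (x i) < 0)) = fun _ => true) ↔ ∀ i, ψ (x i) < 0 := by
    simp [funext_iff]
  calc 2 * |dbc (phi0 R) ψ x|
      = 2 * |phi0 R (fun i => decide (ψ (x i) < 0))| * ∏ i, 2 * |ψ (x i)| := by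
        simp only [dbc, abs_mul, abs_pow, abs_two, abs_prod, abs_abs, prod_mul_distrib, prod_const,
          card_univ, Fintype.card_fin]
        ring
    _ ≤ 2 * ((if (fun i => decide (ψ (x i) < 0)) = fun _ => false then 1 / 2 else 0) +
          (if (fun i => decide (ψ (x i) < 0)) = fun _ => true then 1 / 2 else 0)) *
          ∏ i, 2 * |ψ (x i)| := by
        gcongr
        exact abs_phi0_le R _
    _ = _ := by
        simp only [hfalse, htrue]
        split_ifs <;> ring

section NotInDom

variable {k N R : ℕ} {γ : ℝ} {ψ : (Fin N → Bool) → ℝ}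

lemma sum_prod_filter_not_inDom_nonneg_le (h1 : ∑ x, |ψ x| = 1) (h0 : ∑ x, ψ x = 0)
    (hplus : ∑ x with 0 < ψ x ∧ k ≤ wt x, |ψ x| ≤ 1 / (48 * N)) :
    ∑ x with ¬ inDom γ N R k x ∧ ∀ i, 0 ≤ ψ (x i), ∏ i, 2 * |ψ (x i)| ≤ R / (24 * N) := by
  set Pos := univ.filter fun y : Fin N → Bool => 0 ≤ ψ y
  have hPos : ∑ y ∈ Pos, 2 * |ψ y| = 1 := by
    rw [← mul_sum, (sum_abs_filter_neg_eq_half_and_sum_abs_filter_nonneg_eq_half h1 h0).2]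
    norm_num
  have hsub : ({x | ¬ inDom γ N R k x ∧ ∀ i, 0 ≤ ψ (x i)} : Finset _) ⊆
      piFinset (fun _ : Fin R => Pos) \ piFinset (fun _ => Pos.filter (wt · < k)) := by
    intro x hx
    simp only [inDom, THR, not_or, not_forall, Bool.not_eq_false, decide_eq_true_eq, mem_filter,
      mem_univ, true_and] at hx
    obtain ⟨⟨⟨i, hi⟩, -⟩, hpos⟩ := hx
    simp only [Pos, mem_sdiff, mem_piFinset, mem_filter, mem_univ, true_and, not_forall]
    exact ⟨hpos, i, fun h => by omega⟩
  have hheavy : ∑ y ∈ Pos \ Pos.filter (wt · < k), 2 * |ψ y| ≤ 1 / (24 * N) := by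
    have hzero :
        ∑ y with 0 < ψ y ∧ k ≤ wt y, |ψ y| = ∑ y ∈ Pos \ Pos.filter (wt · < k), |ψ y| := by
      refine sum_subset (fun y => ?_) fun y hy hy' => ?_
      · simp only [Pos, mem_sdiff, mem_filter, mem_univ, true_and]
        exact fun h => ⟨h.1.le, fun h' => absurd h.2 (not_le.2 h'.2)⟩
      · simp only [Pos, mem_sdiff, mem_filter, mem_univ, true_and] at hy hy'
        have hnpos : ¬ 0 < ψ y := fun hlt => hy' ⟨hlt, not_lt.1 fun h => hy.2 ⟨hy.1, h⟩⟩
        rw [abs_eq_zero]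
        exact le_antisymm (not_lt.1 hnpos) hy.1
    rw [← mul_sum, ← hzero]
    linarith [show (1 : ℝ) / (24 * N) = 2 * (1 / (48 * N)) by ring]
  calc ∑ x with ¬ inDom γ N R k x ∧ ∀ i, 0 ≤ ψ (x i), ∏ i, 2 * |ψ (x i)|
      ≤ ∑ x ∈ piFinset (fun _ : Fin R => Pos) \ piFinset (fun _ => Pos.filter (wt · < k)),
          ∏ i, 2 * |ψ (x i)| :=
        sum_le_sum_of_subset_of_nonneg hsub fun x _ _ => prod_nonneg fun i _ => by positivity
    _ ≤ R * ∑ y ∈ Pos \ Pos.filter (wt · < k), 2 * |ψ y| :=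
        sum_prod_piFinset_sdiff_le (fun y _ => by positivity) hPos (filter_subset _ _)
    _ ≤ R * (1 / (24 * N)) := by gcongr
    _ = R / (24 * N) := by ring

lemma sum_prod_filter_not_inDom_neg_le (hk : 1 ≤ k) (hγ : γ < 1 / 4 ^ (k - 1))
    (h1 : ∑ x, |ψ x| = 1) (h0 : ∑ x, ψ x = 0)
    (hminus : ∑ x with ψ x < 0 ∧ wt x < k, |ψ x| ≤ 1 / 2 - 2 / 4 ^ k) :
    ∑ x with ¬ inDom γ N R k x ∧ ∀ i, ψ (x i) < 0, ∏ i, 2 * |ψ (x i)| ≤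
      Real.exp (-2 * R * (1 / 4 ^ (k - 1) - γ) ^ 2) := by
  set Neg := univ.filter fun y : Fin N → Bool => ψ y < 0
  have hNeg : ∑ y ∈ Neg, 2 * |ψ y| = 1 := by
    rw [← mul_sum, (sum_abs_filter_neg_eq_half_and_sum_abs_filter_nonneg_eq_half h1 h0).1]
    norm_num
  set p := ∑ y ∈ Neg with k ≤ wt y, 2 * |ψ y|
  have hp : 1 / 4 ^ (k - 1) ≤ p := by
    have hlight : ∑ y ∈ Neg with ¬ k ≤ wt y, 2 * |ψ y| ≤ 1 - 4 / 4 ^ k := by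
      rw [← mul_sum, filter_filter]
      simp only [not_le]
      exact (mul_le_mul_of_nonneg_left hminus (by norm_num : (0 : ℝ) ≤ 2)).trans_eq (by ring)
    have h4 : (4 : ℝ) / 4 ^ k = 1 / 4 ^ (k - 1) := by
      rw [← Nat.sub_add_cancel hk, pow_succ, Nat.add_sub_cancel]
      field_simp
    linarith [sum_filter_add_sum_filter_not Neg (fun y => k ≤ wt y) (fun y => 2 * |ψ y|)]
  have hsub : ({x | ¬ inDom γ N R k x ∧ ∀ i, ψ (x i) < 0} : Finset _) ⊆
      {x ∈ piFinset (fun _ : Fin R => Neg) | (#{i | k ≤ wt (x i)} : ℝ) < γ * R} := by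
    intro x hx
    simp only [inDom, THR, not_or, not_le, decide_eq_true_eq, mem_filter, mem_univ,
      true_and] at hx
    simp only [Neg, mem_filter, mem_piFinset, mem_univ, true_and]
    exact ⟨hx.2, hx.1.2⟩
  calc ∑ x with ¬ inDom γ N R k x ∧ ∀ i, ψ (x i) < 0, ∏ i, 2 * |ψ (x i)|
      ≤ ∑ x ∈ piFinset (fun _ : Fin R => Neg) with (#{i | k ≤ wt (x i)} : ℝ) < γ * R,
          ∏ i, 2 * |ψ (x i)| :=
        sum_le_sum_of_subset_of_nonneg hsub fun x _ _ => prod_nonneg fun i _ => by positivity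
    _ ≤ Real.exp (-2 * R * (p - γ) ^ 2) :=
        sum_prod_filter_card_lt_le_exp (fun y _ => by positivity) hNeg (fun y => k ≤ wt y)
          (by linarith)
    _ ≤ Real.exp (-2 * R * (1 / 4 ^ (k - 1) - γ) ^ 2) := by
        have hsq := pow_le_pow_left₀ (by linarith) (sub_le_sub_right hp γ) 2
        exact Real.exp_le_exp.2 (by nlinarith [(Nat.cast_nonneg R : (0 : ℝ) ≤ R)])

end NotInDom

theorem stmt10_general (k N R : ℕ) (hk : 2 ≤ k)
    (γ : ℝ) (hγ : γ < 1 / 4 ^ (k - 1))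
    (ψ : (Fin N → Bool) → ℝ)
    (h1 : ∑ x : Fin N → Bool, |ψ x| = 1)
    (h0 : ∑ x : Fin N → Bool, ψ x = 0)
    (hplus : ∑ x ∈ Finset.univ.filter (fun x : Fin N → Bool => 0 < ψ x ∧ k ≤ wt x), |ψ x|
      ≤ 1 / (48 * N))
    (hminus : ∑ x ∈ Finset.univ.filter (fun x : Fin N → Bool => ψ x < 0 ∧ wt x < k), |ψ x|
      ≤ 1 / 2 - 2 / 4 ^ k) :
    2 * ∑ x ∈ Finset.univ.filter (fun x : Fin R → Fin N → Bool => ¬ inDom γ N R k x),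
        |dbc (phi0 R) ψ x| ≤
      R / (24 * N) + Real.exp (-2 * R * (1 / 4 ^ (k - 1) - γ) ^ 2) := by
  calc 2 * ∑ x with ¬ inDom γ N R k x, |dbc (phi0 R) ψ x|
      ≤ ∑ x with ¬ inDom γ N R k x,
          ((if ∀ i, 0 ≤ ψ (x i) then ∏ i, 2 * |ψ (x i)| else 0) +
            (if ∀ i, ψ (x i) < 0 then ∏ i, 2 * |ψ (x i)| else 0)) := by
        rw [mul_sum]
        exact sum_le_sum fun x _ => two_mul_abs_dbc_phi0_le ψ x
    _ = ∑ x with ¬ inDom γ N R k x ∧ ∀ i, 0 ≤ ψ (x i), ∏ i, 2 * |ψ (x i)| +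
          ∑ x with ¬ inDom γ N R k x ∧ ∀ i, ψ (x i) < 0, ∏ i, 2 * |ψ (x i)| := by
        rw [sum_add_distrib, ← sum_filter, ← sum_filter, filter_filter, filter_filter]
    _ ≤ R / (24 * N) + Real.exp (-2 * R * (1 / 4 ^ (k - 1) - γ) ^ 2) :=
        add_le_add (sum_prod_filter_not_inDom_nonneg_le h1 h0 hplus)
          (sum_prod_filter_not_inDom_neg_le (by omega) hγ h1 h0 hminus)

theorem stmt10 (k N R : ℕ) (hk : 2 ≤ k) (hN : 0 < N) (hR : 0 < R)
    (γ : ℝ) (hγ0 : 0 < γ) (hγ : γ < 1 / 4 ^ (k - 1))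
    (ψ : (Fin N → Bool) → ℝ)
    (h1 : ∑ x : Fin N → Bool, |ψ x| = 1)
    (h0 : ∑ x : Fin N → Bool, ψ x = 0)
    (hplus : ∑ x ∈ Finset.univ.filter (fun x : Fin N → Bool => 0 < ψ x ∧ k ≤ wt x), |ψ x|
      ≤ 1 / (48 * N))
    (hminus : ∑ x ∈ Finset.univ.filter (fun x : Fin N → Bool => ψ x < 0 ∧ wt x < k), |ψ x|
      ≤ 1 / 2 - 2 / 4 ^ k) :
    2 * ∑ x ∈ Finset.univ.filter (fun x : Fin R → Fin N → Bool => ¬ inDom γ N R k x),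
        |dbc (phi0 R) ψ x| ≤
      R / (24 * N) + Real.exp (-2 * R * (1 / 4 ^ (k - 1) - γ) ^ 2) :=
  stmt10_general k N R hk γ hγ ψ h1 h0 hplus hminus
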